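/- arXiv:1303.2489 — 3 statements merged into one kernel-verified Lean document; each statement's English description precedes it below -/
import Mathlib

section
/- Unfolding lseg against lseg: if s satisfies the collision condition for lseg(x,y) and lseg(x',z) (i.e., s(x)=s(x'), s(x)≠s(y), s(x')≠s(z)), s,h ⊨ lseg(x',z), and h = h₁ ∗ h₂ with s,h₁ ⊨ lseg(x,y), then s,h₂ ⊨ lseg(y,z). -/
def Heap := ℤ → Option ℤ
def Stack := String → ℤ

def hemp : Heap := fun _ => none
def hsingle (a v : ℤ) : Heap := fun l => if l = a then some v else none
def hdisj (h₁ h₂ : Heap) : Prop := ∀ l, h₁ l = none ∨ h₂ l = none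
def hunion (h₁ h₂ : Heap) : Heap := fun l =>
  match h₁ l with
  | some v => some v
  | none => h₂ l
def hdom (h : Heap) : Set ℤ := {l | h l ≠ none}

/-- Acyclic list segment: `Lseg a b h` means `h` is a list segment from `a` to `b`. -/
inductive Lseg : ℤ → ℤ → Heap → Prop
  | nil (a : ℤ) : Lseg a a hemp
  | cons {a b c : ℤ} {h : Heap} (hne : a ≠ b) (hfresh : h a = none)
      (ht : Lseg c b h) : Lseg a b (hunion (hsingle a c) h)

/-- Spatial predicates. -/
inductive SP where
  | emp : SP
  | next (x y : String) : SP
  | lseg (x y : String) : SP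

/-- Satisfaction of a single spatial predicate. -/
def sat (s : Stack) (h : Heap) : SP → Prop
  | .emp => h = hemp
  | .next x y => h = hsingle (s x) (s y)
  | .lseg x y => Lseg (s x) (s y) h

/-- Satisfaction of a spatial conjunction (list of predicates). -/
def satList (s : Stack) (h : Heap) : List SP → Prop
  | [] => h = hemp
  | S :: Sg => ∃ h₁ h₂, hdisj h₁ h₂ ∧ h = hunion h₁ h₂ ∧ sat s h₁ S ∧ satList s h₂ Sg

/-- Emptiness condition of a spatial predicate. -/
def emptyCond (s : Stack) : SP → Prop
  | .emp => True
  | .next _ _ => False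
  | .lseg x y => s x = s y

/-- Address of a spatial predicate (dummy value 0 for `emp`, which is always empty). -/
def addrVal (s : Stack) : SP → ℤ
  | .emp => 0
  | .next x _ => s x
  | .lseg x _ => s x

def collide (s : Stack) (S S' : SP) : Prop :=
  ¬ emptyCond s S ∧ ¬ emptyCond s S' ∧ addrVal s S = addrVal s S'

def wellFormed (s : Stack) (Sg : List SP) : Prop :=
  List.Pairwise (fun S S' => ¬ collide s S S') Sg

/-!
Two list segments from the same address in overlapping heaps begin with the same cell `a ↦ d`.
Peeling that cell off both and recursing along the segment in `h₁` consumes all of `h₁`, and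
what is left of the big segment is a segment in `h₂` starting where the segment in `h₁` ends.
-/

lemma hunion_hemp_left (h : Heap) : hunion hemp h = h := rfl

lemma hunion_assoc (h₁ h₂ h₃ : Heap) :
    hunion (hunion h₁ h₂) h₃ = hunion h₁ (hunion h₂ h₃) := by
  funext l
  simp only [hunion]
  cases h₁ l <;> rfl

lemma hunion_eq_none {h₁ h₂ : Heap} {l : ℤ} :
    hunion h₁ h₂ l = none ↔ h₁ l = none ∧ h₂ l = none := by
  simp only [hunion]
  cases h₁ l <;> simp

lemma hunion_hsingle_self (a v : ℤ) (h : Heap) : hunion (hsingle a v) h a = some v := by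
  simp [hunion, hsingle]

lemma hunion_hsingle_inj {a v w : ℤ} {h h' : Heap}
    (heq : hunion (hsingle a v) h = hunion (hsingle a w) h')
    (ha : h a = none) (ha' : h' a = none) : v = w ∧ h = h' := by
  refine ⟨?_, funext fun l => ?_⟩
  · simpa only [hunion_hsingle_self, Option.some.injEq] using congrFun heq a
  · by_cases hla : l = a
    · rw [hla, ha, ha']
    · simpa [hunion, hsingle, hla] using congrFun heq l

lemma hdisj.of_hunion_left {h₁ h₂ h₃ : Heap} (hd : hdisj (hunion h₁ h₂) h₃) : hdisj h₂ h₃ :=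
  fun l => (hd l).imp_left fun h => (hunion_eq_none.mp h).2

lemma hdisj.eq_none_of_eq_some {h₁ h₂ : Heap} {l v : ℤ} (hd : hdisj h₁ h₂) (h : h₁ l = some v) :
    h₂ l = none :=
  (hd l).resolve_left (by simp [h])

lemma Lseg.tail_of_hunion_hsingle {a c d : ℤ} {h : Heap}
    (hl : Lseg a c (hunion (hsingle a d) h)) (ha : h a = none) : Lseg d c h := by
  generalize hH : hunion (hsingle a d) h = H at hl
  cases hl with
  | nil => simpa [hunion_hsingle_self, hemp] using congrFun hH a
  | cons _ hfresh ht =>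
    obtain ⟨rfl, rfl⟩ := hunion_hsingle_inj hH ha hfresh
    exact ht

lemma Lseg.of_hunion {a b c : ℤ} {h₁ h₂ : Heap} (hab : Lseg a b h₁) (hd : hdisj h₁ h₂)
    (hac : Lseg a c (hunion h₁ h₂)) : Lseg b c h₂ := by
  induction hab with
  | nil => rwa [hunion_hemp_left] at hac
  | @cons a b d h _ hfresh _ ih =>
    have h₂a : h₂ a = none := hd.eq_none_of_eq_some (hunion_hsingle_self a d h)
    rw [hunion_assoc] at hac
    exact ih hd.of_hunion_left
      (hac.tail_of_hunion_hsingle (hunion_eq_none.mpr ⟨hfresh, h₂a⟩))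

theorem stmt6_general (s : Stack) (h h₁ h₂ : Heap) (x x' y z : String)
    (hcol : s x = s x')
    (hl : sat s h (.lseg x' z))
    (hd : hdisj h₁ h₂) (hu : h = hunion h₁ h₂)
    (hseg : sat s h₁ (.lseg x y)) :
    sat s h₂ (.lseg y z) := by
  subst hu
  simp only [sat] at hl hseg ⊢
  rw [← hcol] at hl
  exact hseg.of_hunion hd hl

theorem stmt6 (s : Stack) (h h₁ h₂ : Heap) (x x' y z : String)
    (hcol : s x = s x') (hne1 : s x ≠ s y) (hne2 : s x' ≠ s z)
    (hl : sat s h (.lseg x' z))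
    (hd : hdisj h₁ h₂) (hu : h = hunion h₁ h₂)
    (hseg : sat s h₁ (.lseg x y)) :
    sat s h₂ (.lseg y z) :=
  stmt6_general s h h₁ h₂ x x' y z hcol hl hd hu hseg
end

section
/- Allocation condition soundness: given a spatial conjunction Σ = S₁ ∗ ... ∗ Sₙ, a stack s, and a heap h with s,h ⊨ Σ, if s ⊨ Alloc(Σ,x) then s(x) ∈ dom(h). -/
lemma hdom_hunion (h₁ h₂ : Heap) : hdom (hunion h₁ h₂) = hdom h₁ ∪ hdom h₂ := by
  ext l
  simp only [hdom, hunion, Set.mem_union, Set.mem_ofPred_eq]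
  cases h₁ l <;> simp

lemma Lseg.mem_hdom {a b : ℤ} {h : Heap} (hseg : Lseg a b h) (hab : a ≠ b) : a ∈ hdom h := by
  cases hseg with
  | nil => exact absurd rfl hab
  | cons =>
    rw [hdom_hunion]
    left
    simp [hdom, hsingle]

lemma addrVal_mem_hdom {s : Stack} {h : Heap} {S : SP} (hsat : sat s h S)
    (hne : ¬ emptyCond s S) : addrVal s S ∈ hdom h := by
  cases S with
  | emp => exact absurd trivial hne
  | next =>
    subst hsat
    simp [hdom, hsingle, addrVal]
  | lseg => exact Lseg.mem_hdom hsat hne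

lemma exists_sat_of_mem_satList {s : Stack} {h : Heap} {Sg : List SP} {S : SP}
    (hs : satList s h Sg) (hS : S ∈ Sg) : ∃ h', sat s h' S ∧ hdom h' ⊆ hdom h := by
  induction Sg generalizing h with
  | nil => simp at hS
  | cons T Sg ih =>
    obtain ⟨h₁, h₂, -, rfl, hsat, hrest⟩ := hs
    rw [hdom_hunion]
    rcases List.mem_cons.mp hS with rfl | hS
    · exact ⟨h₁, hsat, Set.subset_union_left⟩
    · obtain ⟨h', hsat', hsub⟩ := ih hrest hS
      exact ⟨h', hsat', hsub.trans Set.subset_union_right⟩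

theorem stmt14 (s : Stack) (h : Heap) (Sg : List SP) (x : String)
    (hs : satList s h Sg)
    (halloc : ∃ S ∈ Sg, ¬ emptyCond s S ∧ s x = addrVal s S) :
    s x ∈ hdom h := by
  obtain ⟨S, hS, hne, hx⟩ := halloc
  obtain ⟨h', hsat, hsub⟩ := exists_sat_of_mem_satList hs hS
  exact hx ▸ hsub (addrVal_mem_hdom hsat hne)
end

section
/- Non-empty antecedent cannot entail emp: if Σ is a spatial conjunction containing a predicate S with s ⊨ ¬Empty(S), and s ⊨ WellFormed(Σ), then there exists a heap h such that s,h ⊨ Σ and h ≠ ∅; hence s ⊭ (Σ → emp). -/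
/-!
Every predicate has a canonical model with at most one cell: nothing if it is empty, and the
single cell `s x ↦ s y` for a non-empty `next x y` or `lseg x y` (a one-cell list segment).
Well-formedness says that the addresses of the non-empty conjuncts are pairwise distinct, so these
canonical heaps are disjoint and their union models `Sg`. Its domain is exactly the set of addresses
of non-empty conjuncts, which contains the address of `S`; hence it is not `emp`.
-/

lemma hunion_hemp_right (h : Heap) : hunion h hemp = h := by
  funext l
  unfold hunion hemp
  cases h l <;> rfl

lemma mem_hdom_hunion {h₁ h₂ : Heap} {l : ℤ} :
    l ∈ hdom (hunion h₁ h₂) ↔ l ∈ hdom h₁ ∨ l ∈ hdom h₂ := by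
  simp only [hdom, hunion, Set.mem_ofPred_eq]
  cases h₁ l <;> simp

lemma mem_hdom_hsingle {a v l : ℤ} : l ∈ hdom (hsingle a v) ↔ l = a := by
  simp [hdom, hsingle]

lemma not_mem_hdom_hemp (l : ℤ) : l ∉ hdom hemp := by
  simp [hdom, hemp]

lemma ne_hemp_of_mem_hdom {h : Heap} {l : ℤ} (hl : l ∈ hdom h) : h ≠ hemp := by
  rintro rfl
  exact not_mem_hdom_hemp l hl

lemma hdisj_of_disjoint_hdom {h₁ h₂ : Heap} (hd : Disjoint (hdom h₁) (hdom h₂)) :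
    hdisj h₁ h₂ := by
  intro l
  by_contra! hl
  exact Set.disjoint_left.mp hd hl.1 hl.2

lemma Lseg.single {a b : ℤ} (hab : a ≠ b) : Lseg a b (hsingle a b) := by
  simpa [hunion_hemp_right] using Lseg.cons hab rfl (Lseg.nil b)

def canonicalHeap (s : Stack) : SP → Heap
  | .emp => hemp
  | .next x y => hsingle (s x) (s y)
  | .lseg x y => if s x = s y then hemp else hsingle (s x) (s y)

def canonicalHeapList (s : Stack) : List SP → Heap
  | [] => hemp
  | S :: Sg => hunion (canonicalHeap s S) (canonicalHeapList s Sg)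

lemma sat_canonicalHeap (s : Stack) (S : SP) : sat s (canonicalHeap s S) S := by
  cases S with
  | emp => rfl
  | next x y => rfl
  | lseg x y =>
    by_cases hxy : s x = s y
    · simpa [canonicalHeap, sat, hxy] using Lseg.nil (s y)
    · simpa [canonicalHeap, sat, hxy] using Lseg.single hxy

lemma mem_hdom_canonicalHeap {s : Stack} {S : SP} {l : ℤ} :
    l ∈ hdom (canonicalHeap s S) ↔ ¬ emptyCond s S ∧ addrVal s S = l := by
  cases S with
  | emp => simp [canonicalHeap, emptyCond, not_mem_hdom_hemp]
  | next x y => simp [canonicalHeap, emptyCond, addrVal, mem_hdom_hsingle, eq_comm]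
  | lseg x y =>
    by_cases hxy : s x = s y
    · simp [canonicalHeap, emptyCond, hxy, not_mem_hdom_hemp]
    · simp [canonicalHeap, emptyCond, addrVal, hxy, mem_hdom_hsingle, eq_comm]

lemma mem_hdom_canonicalHeapList {s : Stack} {Sg : List SP} {l : ℤ} :
    l ∈ hdom (canonicalHeapList s Sg) ↔ ∃ S ∈ Sg, ¬ emptyCond s S ∧ addrVal s S = l := by
  induction Sg with
  | nil => simp [canonicalHeapList, not_mem_hdom_hemp]
  | cons S Sg ih =>
    simp [canonicalHeapList, mem_hdom_hunion, mem_hdom_canonicalHeap, ih]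

lemma hdisj_canonicalHeap_canonicalHeapList {s : Stack} {S : SP} {Sg : List SP}
    (hnc : ∀ S' ∈ Sg, ¬ collide s S S') :
    hdisj (canonicalHeap s S) (canonicalHeapList s Sg) := by
  refine hdisj_of_disjoint_hdom (Set.disjoint_left.mpr fun l hl hl' => ?_)
  obtain ⟨hS, rfl⟩ := mem_hdom_canonicalHeap.mp hl
  obtain ⟨S', hS'mem, hS', haddr⟩ := mem_hdom_canonicalHeapList.mp hl'
  exact hnc S' hS'mem ⟨hS, hS', haddr.symm⟩

lemma satList_canonicalHeapList {s : Stack} {Sg : List SP} (hwf : wellFormed s Sg) :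
    satList s (canonicalHeapList s Sg) Sg := by
  induction Sg with
  | nil => rfl
  | cons S Sg ih =>
    obtain ⟨hnc, hwf'⟩ := List.pairwise_cons.mp hwf
    exact ⟨_, _, hdisj_canonicalHeap_canonicalHeapList hnc, rfl, sat_canonicalHeap s S, ih hwf'⟩

theorem stmt17 (s : Stack) (Sg : List SP) (S : SP)
    (hmem : S ∈ Sg) (hne : ¬ emptyCond s S) (hwf : wellFormed s Sg) :
    (∃ h : Heap, satList s h Sg ∧ h ≠ hemp) ∧
      ¬ (∀ h : Heap, satList s h Sg → h = hemp) := by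
  have hsat := satList_canonicalHeapList hwf
  have hnonempty : canonicalHeapList s Sg ≠ hemp :=
    ne_hemp_of_mem_hdom (mem_hdom_canonicalHeapList.mpr ⟨S, hmem, hne, rfl⟩)
  exact ⟨⟨_, hsat, hnonempty⟩, fun hall => hnonempty (hall _ hsat)⟩
end
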